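/- In Cl(4,ℂ), the CNOT element λ_CNOT = f₁f₁† − f₁†f₁(f₂ + f₂†) acts correctly on the 2-qubit basis: it fixes |00⟩ = f₁f₁†f₂f₂† and |01⟩ = f₂†f₁f₁†, and swaps |10⟩ = f₁†f₂f₂† with |11⟩ = f₁†f₂†·(f₁f₁†f₂f₂†) — i.e. λ_CNOT·|10⟩ = |11⟩ and λ_CNOT·|11⟩ = |10⟩. -/

import Mathlib

open CliffordAlgebra

/-- The standard quadratic form on ℂ⁴ making e₁,…,e₄ orthonormal. -/
noncomputable def Q4 : QuadraticForm ℂ (Fin 4 → ℂ) :=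
  QuadraticMap.weightedSumSquares ℂ (fun _ : Fin 4 => (1 : ℂ))

/-- The orthonormal generators of Cl(4,ℂ). -/
noncomputable def e (i : Fin 4) : CliffordAlgebra Q4 := ι Q4 (Pi.single i 1)

/-- The Witt basis element f₁ = (1/2)(e₁ - i e₃). -/
noncomputable def f1 : CliffordAlgebra Q4 := (1/2 : ℂ) • (e 0 - Complex.I • e 2)
/-- The Witt basis element f₁† = (1/2)(e₁ + i e₃). -/
noncomputable def f1d : CliffordAlgebra Q4 := (1/2 : ℂ) • (e 0 + Complex.I • e 2)
/-- The Witt basis element f₂ = (1/2)(e₂ - i e₄). -/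
noncomputable def f2 : CliffordAlgebra Q4 := (1/2 : ℂ) • (e 1 - Complex.I • e 3)
/-- The Witt basis element f₂† = (1/2)(e₂ + i e₄). -/
noncomputable def f2d : CliffordAlgebra Q4 := (1/2 : ℂ) • (e 1 + Complex.I • e 3)

/-! Write `N = f₁†f₁` and `P = f₁f₁† = 1 - N` (the vacuum projector of the first mode), so that
the CNOT element is `P - N (f₂ + f₂†)`. On states `z` with `N z = 0` it acts as the identity. On
states `f₁† y` it acts as `f₁† (f₂ + f₂†) y`: moving `f₂ + f₂†` past `f₁†` gives a sign that cancels
the minus, and `f₂ + f₂†` exchanges `f₂f₂†` and `f₂†`. All the relations used are the CAR, which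
hold for `f = ½(x - i y)`, `f† = ½(x + i y)` whenever `x, y` are anticommuting square roots of `1`,
such as the generators `eᵢ`. -/

section Fermion

variable {R : Type*} [Ring R]

def Anticommute (x y : R) : Prop := x * y + y * x = 0

theorem Anticommute.symm {x y : R} (h : Anticommute x y) : Anticommute y x := by
  rwa [Anticommute, add_comm]

theorem Anticommute.mul_eq_neg {x y : R} (h : Anticommute x y) : x * y = -(y * x) :=
  eq_neg_of_add_eq_zero_left h

theorem Anticommute.add_right {x y z : R} (hy : Anticommute x y) (hz : Anticommute x z) :
    Anticommute x (y + z) := by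
  rw [Anticommute, mul_add, add_mul, add_add_add_comm, hy, hz, add_zero]

theorem Anticommute.commute_mul {x y z : R} (hx : Anticommute x z) (hy : Anticommute y z) :
    Commute (x * y) z := by
  rw [Commute, SemiconjBy, mul_assoc, hy.mul_eq_neg, mul_neg, ← mul_assoc, hx.mul_eq_neg,
    neg_mul, neg_neg, mul_assoc]

structure IsFermionicMode (c cd : R) : Prop where
  mul_self_left : c * c = 0
  mul_self_right : cd * cd = 0
  anticomm : c * cd + cd * c = 1

namespace IsFermionicMode

variable {c cd : R}

theorem mul_mul_self_right (h : IsFermionicMode c cd) : c * cd * cd = 0 := by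
  rw [mul_assoc, h.mul_self_right, mul_zero]

theorem number_mul_vacuum (h : IsFermionicMode c cd) : cd * c * (c * cd) = 0 := by
  rw [mul_assoc, ← mul_assoc c, h.mul_self_left, zero_mul, mul_zero]

theorem number_eq (h : IsFermionicMode c cd) : cd * c = 1 - c * cd :=
  eq_sub_of_add_eq' h.anticomm

theorem creation_mul_vacuum (h : IsFermionicMode c cd) : cd * (c * cd) = cd := by
  rw [← mul_assoc, h.number_eq, sub_mul, one_mul, h.mul_mul_self_right, sub_zero]

theorem add_mul_vacuum (h : IsFermionicMode c cd) : (c + cd) * (c * cd) = cd := by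
  rw [add_mul, ← mul_assoc, h.mul_self_left, zero_mul, zero_add, h.creation_mul_vacuum]

theorem add_mul_right (h : IsFermionicMode c cd) : (c + cd) * cd = c * cd := by
  rw [add_mul, h.mul_self_right, add_zero]

end IsFermionicMode

variable {a ad x : R}

theorem cnot_mul_of_number_mul_eq_zero (hA : IsFermionicMode a ad) (hx : Commute (ad * a) x)
    {z : R} (hz : ad * a * z = 0) : (a * ad - ad * a * x) * z = z := by
  rw [sub_mul, eq_sub_of_add_eq hA.anticomm, sub_mul, one_mul, hz, sub_zero, hx.eq,
    mul_assoc, hz, mul_zero, sub_zero]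

theorem cnot_mul_creation_mul (hA : IsFermionicMode a ad) (hx : Anticommute ad x) (y : R) :
    (a * ad - ad * a * x) * (ad * y) = ad * (x * y) :=
  calc (a * ad - ad * a * x) * (ad * y) = a * ad * ad * y - ad * a * (x * ad) * y := by
        noncomm_ring
    _ = a * ad * ad * y + ad * (a * ad) * (x * y) := by
        rw [hx.symm.mul_eq_neg]; noncomm_ring
    _ = ad * (x * y) := by
        rw [hA.mul_mul_self_right, hA.creation_mul_vacuum, zero_mul, zero_add]

theorem cnot_action_of_isFermionicMode {b bd : R} (hA : IsFermionicMode a ad)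
    (hB : IsFermionicMode b bd) (hab : Anticommute a b) (habd : Anticommute a bd)
    (hadb : Anticommute ad b) (hadbd : Anticommute ad bd) :
    (a * ad - ad * a * (b + bd)) * (a * ad * (b * bd)) = a * ad * (b * bd) ∧
    (a * ad - ad * a * (b + bd)) * (bd * (a * ad)) = bd * (a * ad) ∧
    (a * ad - ad * a * (b + bd)) * (ad * (b * bd)) = ad * bd * (a * ad * (b * bd)) ∧
    (a * ad - ad * a * (b + bd)) * (ad * bd * (a * ad * (b * bd))) = ad * (b * bd) := by
  have hNx : Commute (ad * a) (b + bd) :=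
    (hadb.add_right hadbd).commute_mul (hab.add_right habd)
  have hPbd : Commute (a * ad) bd := habd.commute_mul hadbd
  have hNbd : Commute (ad * a) bd := hadbd.commute_mul habd
  have two_particles : ad * bd * (a * ad * (b * bd)) = ad * bd :=
    calc ad * bd * (a * ad * (b * bd)) = ad * (a * ad) * (bd * (b * bd)) := by
          rw [mul_assoc, ← hPbd.left_comm, ← mul_assoc ad]
      _ = ad * bd := by rw [hA.creation_mul_vacuum, hB.creation_mul_vacuum]
  refine ⟨?_, ?_, ?_, ?_⟩
  · refine cnot_mul_of_number_mul_eq_zero hA hNx ?_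
    rw [← mul_assoc, hA.number_mul_vacuum, zero_mul]
  · refine cnot_mul_of_number_mul_eq_zero hA hNx ?_
    rw [← mul_assoc, hNbd.eq, mul_assoc, hA.number_mul_vacuum, mul_zero]
  · rw [cnot_mul_creation_mul hA (hadb.add_right hadbd), hB.add_mul_vacuum, two_particles]
  · rw [two_particles, cnot_mul_creation_mul hA (hadb.add_right hadbd), hB.add_mul_right]

end Fermion

section Witt

open Complex

variable {A : Type*} [Ring A] [Algebra ℂ A] {x y z : A}

theorem isFermionicMode_witt (hx : x * x = 1) (hy : y * y = 1) (hxy : Anticommute x y) :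
    IsFermionicMode ((1/2 : ℂ) • (x - I • y)) ((1/2 : ℂ) • (x + I • y)) := by
  unfold Anticommute at hxy
  constructor
  · simp only [sub_mul, mul_sub, smul_mul_assoc, mul_smul_comm]
    linear_combination (norm := module)
      (1/4 : ℂ) • hx + (I^2/4) • hy - (I/4) • hxy + I_sq • ((1/4 : ℂ) • (1 : A))
  · simp only [add_mul, mul_add, smul_mul_assoc, mul_smul_comm]
    linear_combination (norm := module)
      (1/4 : ℂ) • hx + (I^2/4) • hy + (I/4) • hxy + I_sq • ((1/4 : ℂ) • (1 : A))
  · simp only [add_mul, mul_add, sub_mul, mul_sub, smul_mul_assoc, mul_smul_comm]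
    linear_combination (norm := module)
      (1/2 : ℂ) • hx - (I^2/2) • hy - I_sq • ((1/2 : ℂ) • (1 : A))

theorem anticommute_witt_left (hx : Anticommute x z) (hy : Anticommute y z) :
    Anticommute ((1/2 : ℂ) • (x - I • y)) z ∧ Anticommute ((1/2 : ℂ) • (x + I • y)) z := by
  unfold Anticommute at *
  constructor
  · simp only [sub_mul, mul_sub, smul_mul_assoc, mul_smul_comm]
    linear_combination (norm := module) (1/2 : ℂ) • hx - (I/2) • hy
  · simp only [add_mul, mul_add, smul_mul_assoc, mul_smul_comm]
    linear_combination (norm := module) (1/2 : ℂ) • hx + (I/2) • hy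

end Witt

theorem e_mul_self (i : Fin 4) : e i * e i = 1 := by
  have hQ : Q4 (Pi.single i 1) = 1 := by
    simp [Q4, QuadraticMap.weightedSumSquares_apply, Pi.single_apply]
  rw [e, ι_sq_scalar, hQ, map_one]

theorem anticommute_e {i j : Fin 4} (h : i ≠ j) : Anticommute (e i) (e j) := by
  refine ι_mul_ι_add_swap_of_isOrtho ?_
  simp [QuadraticMap.IsOrtho, Q4, QuadraticMap.weightedSumSquares_apply, Pi.single_apply, mul_add,
    Finset.sum_add_distrib, h, h.symm]

/-- the CNOT element fixes |00⟩ and |01⟩ and swaps |10⟩ with |11⟩. -/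
theorem CNOT_action :
    (f1 * f1d - f1d * f1 * (f2 + f2d)) * (f1 * f1d * (f2 * f2d)) =
      f1 * f1d * (f2 * f2d) ∧
    (f1 * f1d - f1d * f1 * (f2 + f2d)) * (f2d * (f1 * f1d)) = f2d * (f1 * f1d) ∧
    (f1 * f1d - f1d * f1 * (f2 + f2d)) * (f1d * (f2 * f2d)) =
      f1d * f2d * (f1 * f1d * (f2 * f2d)) ∧
    (f1 * f1d - f1d * f1 * (f2 + f2d)) * (f1d * f2d * (f1 * f1d * (f2 * f2d))) =
      f1d * (f2 * f2d) := by
  have mode1 : IsFermionicMode f1 f1d :=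
    isFermionicMode_witt (e_mul_self 0) (e_mul_self 2) (anticommute_e (by decide))
  have mode2 : IsFermionicMode f2 f2d :=
    isFermionicMode_witt (e_mul_self 1) (e_mul_self 3) (anticommute_e (by decide))
  obtain ⟨h2_e0, h2d_e0⟩ : Anticommute f2 (e 0) ∧ Anticommute f2d (e 0) :=
    anticommute_witt_left (anticommute_e (by decide)) (anticommute_e (by decide))
  obtain ⟨h2_e2, h2d_e2⟩ : Anticommute f2 (e 2) ∧ Anticommute f2d (e 2) :=
    anticommute_witt_left (anticommute_e (by decide)) (anticommute_e (by decide))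
  obtain ⟨h12, h1d2⟩ : Anticommute f1 f2 ∧ Anticommute f1d f2 :=
    anticommute_witt_left h2_e0.symm h2_e2.symm
  obtain ⟨h12d, h1d2d⟩ : Anticommute f1 f2d ∧ Anticommute f1d f2d :=
    anticommute_witt_left h2d_e0.symm h2d_e2.symm
  exact cnot_action_of_isFermionicMode mode1 mode2 h12 h12d h1d2 h1d2d
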